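/- arXiv:1201.3350 — 2 statements merged into one kernel-verified Lean document; each statement's English description precedes it below -/
import Mathlib

section
/- Take game constants p₁ = 1, q₁ = 1, p₂ = 0, q₂ = 1 (so D = 1, B_Q = {(X,Y) ∈ ℕ² : X ≤ Y} and T_Q = {(0,0)}). Then the set of P-positions of the corresponding Rational Wythoff Nim equals {(⌊φn⌋, ⌊φn⌋ + ⌊φ²n⌋) : n ∈ ℕ} ∪ {(⌊φ²n⌋, ⌊φn⌋ + ⌊φ²n⌋) : n ∈ ℕ}, where φ := (1+√5)/2. -/
/-- Membership in the set of allowed positions `B_Q`. -/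
def inBQ (p1 q1 p2 q2 : ℕ) (pos : ℕ × ℕ) : Prop :=
  pos.1 * q1 ≤ pos.2 * p1 ∧ pos.2 * p2 ≤ pos.1 * q2

/-- Membership in the set `T_Q` (the inequalities are read in ℤ). -/
def inTQ (p1 q1 p2 q2 : ℕ) (pos : ℕ × ℕ) : Prop :=
  inBQ p1 q1 p2 q2 pos ∧
    (p1 : ℤ) * ((pos.2 : ℤ) - (q2 : ℤ)) < (q1 : ℤ) * ((pos.1 : ℤ) - (p2 : ℤ)) ∧
    (p2 : ℤ) * ((pos.2 : ℤ) - (q1 : ℤ)) > (q2 : ℤ) * ((pos.1 : ℤ) - (p1 : ℤ))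

/-- A legal move of the Q-subtraction game `G_Q(M)`. -/
def QMove (p1 q1 p2 q2 : ℕ) (M : Set (ℕ × ℕ)) (pos pos' : ℕ × ℕ) : Prop :=
  ∃ s t : ℕ, (s, t) ∈ M ∧
    p1 * s + p2 * t ≤ pos.1 ∧ q1 * s + q2 * t ≤ pos.2 ∧
    pos'.1 = pos.1 - (p1 * s + p2 * t) ∧ pos'.2 = pos.2 - (q1 * s + q2 * t) ∧
    inBQ p1 q1 p2 q2 pos'

/-- `pos` is a P-position of the game with move relation `move`: every legal move
leads to a non-P-position.  (Every legal move of the games considered here strictly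
decreases the coordinate sum, which makes the recursion well-founded.) -/
def PPos (move : ℕ × ℕ → ℕ × ℕ → Prop) : ℕ × ℕ → Prop
  | pos => ∀ pos', move pos pos' → pos'.1 + pos'.2 < pos.1 + pos.2 → ¬ PPos move pos'
termination_by pos => pos.1 + pos.2

/-- The move set of Rational Wythoff Nim. -/
def MRW : Set (ℕ × ℕ) := {m | ∃ t : ℕ, 1 ≤ t ∧ (m = (0, t) ∨ m = (t, 0) ∨ m = (t, t))}

/-- The golden ratio `φ = (1+√5)/2`. -/
noncomputable def phi : ℝ := (1 + Real.sqrt 5) / 2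


/-! In the coordinates `(a, b) = (X, Y - X)` the board `X ≤ Y` becomes all of `ℕ²`, and the moves
`(0, t)`, `(t, 0)`, `(t, t)` become Wythoff's moves: lower `b`, lower `a`, lower both by the same
amount. Wythoff's pairs `(⌊nφ⌋, ⌊nφ²⌋)` and their swaps form a set with no move inside it and
reachable by one move from every other position: the lower and upper Wythoff sequences partition
the positive integers (Rayleigh, since `1/φ + 1/φ² = 1`) and the `n`-th pair has difference `n`.
As every move lowers the coordinate sum, such a set is exactly the set of P-positions. -/

open scoped symmDiff

section Beatty

variable {r s : ℝ}

lemma beattySeq_natCast (hr : 0 ≤ r) (n : ℕ) : beattySeq r n = ⌊r * n⌋₊ := by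
  rw [beattySeq, mul_comm, ← Int.natCast_floor_eq_floor (by positivity)]
  norm_cast

lemma natCast_mem_beattySeq_pos_iff (hr : 0 ≤ r) (a : ℕ) :
    (a : ℤ) ∈ {beattySeq r k | k > 0} ↔ ∃ n : ℕ, 0 < n ∧ ⌊r * n⌋₊ = a := by
  constructor
  · rintro ⟨k, hk, hka⟩
    refine ⟨k.toNat, by omega, ?_⟩
    have : beattySeq r k.toNat = a := by rw [Int.toNat_of_nonneg hk.le, hka]
    rw [beattySeq_natCast hr] at this
    exact_mod_cast this
  · rintro ⟨n, hn, rfl⟩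
    exact ⟨n, by exact_mod_cast hn, beattySeq_natCast hr n⟩

/-- Rayleigh's theorem, read on the natural numbers. -/
lemma Irrational.natFloor_partition (hrs : r.HolderConjugate s) (hr : Irrational r)
    {a : ℕ} (ha : 0 < a) :
    ((∃ n : ℕ, 0 < n ∧ ⌊r * n⌋₊ = a) ∧ ¬ ∃ n : ℕ, 0 < n ∧ ⌊s * n⌋₊ = a) ∨
      ((∃ n : ℕ, 0 < n ∧ ⌊s * n⌋₊ = a) ∧ ¬ ∃ n : ℕ, 0 < n ∧ ⌊r * n⌋₊ = a) := by
  have h : (a : ℤ) ∈ {beattySeq r k | k > 0} ∆ {beattySeq s k | k > 0} := by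
    rw [hr.beattySeq_symmDiff_beattySeq_pos hrs]
    exact Int.natCast_pos.2 ha
  simpa only [Set.mem_symmDiff, natCast_mem_beattySeq_pos_iff hrs.nonneg,
    natCast_mem_beattySeq_pos_iff hrs.symm.nonneg] using h

lemma Irrational.natFloor_mul_ne (hrs : r.HolderConjugate s) (hr : Irrational r) {n m : ℕ}
    (hn : 0 < n) (hm : 0 < m) : ⌊r * n⌋₊ ≠ ⌊s * m⌋₊ := by
  intro h
  have hpos : 0 < ⌊r * n⌋₊ :=
    Nat.floor_pos.2 (one_le_mul_of_one_le_of_one_le hrs.lt.le (Nat.one_le_cast.2 hn))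
  rcases hr.natFloor_partition hrs hpos with ⟨-, hs⟩ | ⟨-, hr'⟩
  · exact hs ⟨m, hm, h.symm⟩
  · exact hr' ⟨n, hn, rfl⟩

lemma Irrational.exists_natFloor_mul_eq (hrs : r.HolderConjugate s) (hr : Irrational r)
    (a : ℕ) : ∃ n : ℕ, ⌊r * n⌋₊ = a ∨ ⌊s * n⌋₊ = a := by
  rcases Nat.eq_zero_or_pos a with rfl | ha
  · exact ⟨0, by simp⟩
  rcases hr.natFloor_partition hrs ha with ⟨⟨n, -, hn⟩, -⟩ | ⟨⟨n, -, hn⟩, -⟩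
  exacts [⟨n, Or.inl hn⟩, ⟨n, Or.inr hn⟩]

lemma strictMono_natFloor_mul (hr : 1 ≤ r) : StrictMono fun n : ℕ ↦ ⌊r * n⌋₊ := by
  refine strictMono_nat_of_lt_succ fun n ↦ ?_
  have hstep : r * n + 1 ≤ r * ↑(n + 1) := by push_cast; linarith
  calc ⌊r * n⌋₊ < ⌊r * n⌋₊ + 1 := Nat.lt_succ_self _
    _ = ⌊r * n + 1⌋₊ := (Nat.floor_add_one (by positivity)).symm
    _ ≤ ⌊r * ↑(n + 1)⌋₊ := Nat.floor_le_floor hstep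

end Beatty

lemma phi_pos : 0 < phi := Real.goldenRatio_pos

lemma one_lt_phi : 1 < phi := Real.one_lt_goldenRatio

lemma phi_sq : phi ^ 2 = phi + 1 := Real.goldenRatio_sq

lemma phi_irrational : Irrational phi := Real.goldenRatio_irrational

lemma phi_holderConjugate : phi.HolderConjugate (phi ^ 2) := by
  have := phi_pos
  rw [Real.holderConjugate_iff]
  refine ⟨one_lt_phi, ?_⟩
  field_simp
  linear_combination -phi_sq

namespace Wythoff

noncomputable def lower (n : ℕ) : ℕ := ⌊phi * n⌋₊

noncomputable def upper (n : ℕ) : ℕ := ⌊phi ^ 2 * n⌋₊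

@[simp] lemma lower_zero : lower 0 = 0 := by simp [lower]

@[simp] lemma upper_zero : upper 0 = 0 := by simp [upper]

lemma upper_eq (n : ℕ) : upper n = lower n + n := by
  rw [upper, lower, phi_sq, add_mul, one_mul,
    Nat.floor_add_natCast (mul_nonneg phi_pos.le n.cast_nonneg)]

lemma lower_strictMono : StrictMono lower :=
  strictMono_natFloor_mul one_lt_phi.le

lemma upper_strictMono : StrictMono upper := fun n m h ↦ by
  rw [upper_eq, upper_eq]
  exact add_lt_add (lower_strictMono h) h

lemma le_lower (n : ℕ) : n ≤ lower n :=
  lower_strictMono.le_apply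

lemma lower_eq_upper_iff {n m : ℕ} : lower n = upper m ↔ n = 0 ∧ m = 0 := by
  refine ⟨fun h ↦ ?_, by rintro ⟨rfl, rfl⟩; simp [upper_eq]⟩
  have hn := le_lower n
  rcases Nat.eq_zero_or_pos n with rfl | hn0
  · rw [upper_eq, lower_zero] at h; omega
  rcases Nat.eq_zero_or_pos m with rfl | hm0
  · rw [upper_eq, lower_zero] at h; omega
  exact absurd h (phi_irrational.natFloor_mul_ne phi_holderConjugate hn0 hm0)

lemma exists_eq_lower_or_upper (a : ℕ) : ∃ n, lower n = a ∨ upper n = a :=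
  phi_irrational.exists_natFloor_mul_eq phi_holderConjugate a

def pairs : Set (ℕ × ℕ) := {p | ∃ n, p = (lower n, upper n) ∨ p = (upper n, lower n)}

def Move (p q : ℕ × ℕ) : Prop :=
  ∃ u, 0 < u ∧
    (q.1 = p.1 ∧ q.2 + u = p.2 ∨ q.1 + u = p.1 ∧ q.2 = p.2 ∨ q.1 + u = p.1 ∧ q.2 + u = p.2)

lemma Move.swap {p q : ℕ × ℕ} (h : Move p q) : Move p.swap q.swap := by
  obtain ⟨u, hu, h⟩ := h
  exact ⟨u, hu, by simp only [Prod.fst_swap, Prod.snd_swap]; tauto⟩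

lemma swap_mem_pairs {p : ℕ × ℕ} (hp : p ∈ pairs) : p.swap ∈ pairs := by
  obtain ⟨n, rfl | rfl⟩ := hp
  exacts [⟨n, Or.inr rfl⟩, ⟨n, Or.inl rfl⟩]

lemma eq_of_mem_pairs_of_fst_eq {p q : ℕ × ℕ} (hp : p ∈ pairs) (hq : q ∈ pairs)
    (h : p.1 = q.1) : p = q := by
  obtain ⟨n, rfl | rfl⟩ := hp <;> obtain ⟨m, rfl | rfl⟩ := hq <;> simp only at h
  · rw [lower_strictMono.injective h]
  · obtain ⟨rfl, rfl⟩ := lower_eq_upper_iff.1 h; simp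
  · obtain ⟨rfl, rfl⟩ := lower_eq_upper_iff.1 h.symm; simp
  · rw [upper_strictMono.injective h]

lemma eq_of_mem_pairs_of_add_eq {p q : ℕ × ℕ} (hp : p ∈ pairs) (hq : q ∈ pairs)
    (h : p.1 + q.2 = q.1 + p.2) : p = q := by
  obtain ⟨n, rfl | rfl⟩ := hp <;> obtain ⟨m, rfl | rfl⟩ := hq <;>
    simp only [upper_eq] at h ⊢
  · obtain rfl : n = m := by omega
    rfl
  · obtain ⟨rfl, rfl⟩ : n = 0 ∧ m = 0 := by omega
    simp
  · obtain ⟨rfl, rfl⟩ : n = 0 ∧ m = 0 := by omega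
    simp
  · obtain rfl : n = m := by omega
    rfl

lemma not_move_of_mem_pairs {p q : ℕ × ℕ} (hp : p ∈ pairs) (hq : q ∈ pairs) : ¬ Move p q := by
  rintro ⟨u, hu, ⟨h1, h2⟩ | ⟨h1, h2⟩ | ⟨h1, h2⟩⟩
  · obtain rfl := eq_of_mem_pairs_of_fst_eq hp hq h1.symm
    omega
  · obtain rfl := Prod.swap_inj.1 <|
      eq_of_mem_pairs_of_fst_eq (swap_mem_pairs hp) (swap_mem_pairs hq) h2.symm
    omega
  · obtain rfl := eq_of_mem_pairs_of_add_eq hp hq (by omega)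
    omega

lemma exists_move_of_fst_le {p : ℕ × ℕ} (hle : p.1 ≤ p.2) (hp : p ∉ pairs) :
    ∃ q ∈ pairs, Move p q := by
  obtain ⟨a, b⟩ := p
  obtain ⟨n, rfl | rfl⟩ := exists_eq_lower_or_upper a
  · have hb := upper_eq n
    -- the difference of the pair of index `n` is `n`; compare it with `b - a`
    rcases lt_trichotomy (b - lower n) n with hlt | heq | hgt
    · have hd := lower_strictMono hlt
      have hd' := upper_eq (b - lower n)
      exact ⟨_, ⟨b - lower n, Or.inl rfl⟩, lower n - lower (b - lower n), by omega,
        Or.inr (Or.inr ⟨by omega, by omega⟩)⟩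
    · exact absurd ⟨n, Or.inl (Prod.ext rfl (by omega))⟩ hp
    · exact ⟨_, ⟨n, Or.inl rfl⟩, b - upper n, by omega, Or.inl ⟨rfl, by omega⟩⟩
  · have hb := upper_eq n
    rcases eq_or_ne b (lower n) with rfl | hne
    · exact absurd ⟨n, Or.inr rfl⟩ hp
    · exact ⟨_, ⟨n, Or.inr rfl⟩, b - lower n, by omega, Or.inl ⟨rfl, by omega⟩⟩

lemma exists_move {p : ℕ × ℕ} (hp : p ∉ pairs) : ∃ q ∈ pairs, Move p q := by
  rcases le_total p.1 p.2 with hle | hle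
  · exact exists_move_of_fst_le hle hp
  · obtain ⟨q, hq, hpq⟩ := exists_move_of_fst_le (p := p.swap) hle
      fun h ↦ hp (by simpa using swap_mem_pairs h)
    exact ⟨q.swap, swap_mem_pairs hq, by simpa using hpq.swap⟩

end Wythoff

theorem PPos_iff_mem_of_independent_of_absorbing {move : ℕ × ℕ → ℕ × ℕ → Prop}
    {B S : Set (ℕ × ℕ)} (hB : ∀ p q, move p q → q ∈ B)
    (hind : ∀ p ∈ S, ∀ q ∈ S, ¬ move p q)
    (habs : ∀ p ∈ B, p ∉ S → ∃ q ∈ S, move p q ∧ q.1 + q.2 < p.1 + p.2) :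
    ∀ p ∈ B, PPos move p ↔ p ∈ S := by
  intro p
  induction hN : p.1 + p.2 using Nat.strong_induction_on generalizing p with
  | _ N ih =>
  intro hp
  rw [PPos]
  constructor
  · intro hP
    by_contra hpS
    obtain ⟨q, hqS, hpq, hlt⟩ := habs p hp hpS
    exact hP q hpq hlt ((ih _ (hN ▸ hlt) q rfl (hB p q hpq)).2 hqS)
  · intro hpS q hpq hlt hPq
    exact hind p hpS q ((ih _ (hN ▸ hlt) q rfl (hB p q hpq)).1 hPq) hpq

def boardOf (p : ℕ × ℕ) : ℕ × ℕ := (p.1, p.1 + p.2)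

lemma inBQ_iff_mem_range_boardOf {P : ℕ × ℕ} : inBQ 1 1 0 1 P ↔ P ∈ Set.range boardOf := by
  constructor
  · intro h
    exact ⟨(P.1, P.2 - P.1), Prod.ext rfl (by simp only [inBQ] at h; simp only [boardOf]; omega)⟩
  · rintro ⟨p, rfl⟩
    simp [inBQ, boardOf]

lemma qMove_boardOf_iff {p q : ℕ × ℕ} :
    QMove 1 1 0 1 MRW (boardOf p) (boardOf q) ↔ Wythoff.Move p q := by
  simp only [QMove, MRW, boardOf, inBQ, Wythoff.Move]
  constructor
  · rintro ⟨s, t, ⟨u, hu, h⟩, h1⟩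
    simp only [Prod.mk.injEq] at h
    rcases h with ⟨rfl, rfl⟩ | ⟨rfl, rfl⟩ | ⟨rfl, rfl⟩ <;> exact ⟨_, hu, by omega⟩
  · rintro ⟨u, hu, h | h | h⟩
    · exact ⟨0, u, ⟨u, hu, Or.inl rfl⟩, by omega⟩
    · exact ⟨u, 0, ⟨u, hu, Or.inr (Or.inl rfl)⟩, by omega⟩
    · exact ⟨u, u, ⟨u, hu, Or.inr (Or.inr rfl)⟩, by omega⟩

lemma PPos_iff_mem_image_pairs {P : ℕ × ℕ} (hP : inBQ 1 1 0 1 P) :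
    PPos (QMove 1 1 0 1 MRW) P ↔ P ∈ boardOf '' Wythoff.pairs := by
  refine PPos_iff_mem_of_independent_of_absorbing ?_ ?_ ?_ P (inBQ_iff_mem_range_boardOf.1 hP)
  · rintro P Q ⟨s, t, -, -, -, -, -, hQ⟩
    exact inBQ_iff_mem_range_boardOf.1 hQ
  · rintro _ ⟨p, hp, rfl⟩ _ ⟨q, hq, rfl⟩ hpq
    exact Wythoff.not_move_of_mem_pairs hp hq (qMove_boardOf_iff.1 hpq)
  · rintro _ ⟨p, rfl⟩ hp
    obtain ⟨q, hq, hpq⟩ := Wythoff.exists_move fun h ↦ hp ⟨p, h, rfl⟩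
    refine ⟨boardOf q, ⟨q, hq, rfl⟩, qMove_boardOf_iff.2 hpq, ?_⟩
    obtain ⟨u, hu, h⟩ := hpq
    simp only [boardOf]
    omega

lemma image_boardOf_pairs : boardOf '' Wythoff.pairs =
    {pos : ℕ × ℕ | ∃ n : ℕ, pos = (⌊phi * n⌋₊, ⌊phi * n⌋₊ + ⌊phi ^ 2 * n⌋₊)} ∪
      {pos : ℕ × ℕ | ∃ n : ℕ, pos = (⌊phi ^ 2 * n⌋₊, ⌊phi * n⌋₊ + ⌊phi ^ 2 * n⌋₊)} := by
  ext P
  constructor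
  · rintro ⟨_, ⟨n, rfl | rfl⟩, rfl⟩
    · exact Or.inl ⟨n, rfl⟩
    · exact Or.inr ⟨n, by simp [boardOf, Wythoff.lower, Wythoff.upper, add_comm]⟩
  · rintro (⟨n, rfl⟩ | ⟨n, rfl⟩)
    · exact ⟨_, ⟨n, Or.inl rfl⟩, rfl⟩
    · exact ⟨_, ⟨n, Or.inr rfl⟩, by simp [boardOf, Wythoff.lower, Wythoff.upper, add_comm]⟩

theorem stmt_15 :
    {pos : ℕ × ℕ | inBQ 1 1 0 1 pos ∧ PPos (QMove 1 1 0 1 MRW) pos} =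
      {pos : ℕ × ℕ | ∃ n : ℕ, pos = (⌊phi * n⌋₊, ⌊phi * n⌋₊ + ⌊phi ^ 2 * n⌋₊)} ∪
      {pos : ℕ × ℕ | ∃ n : ℕ, pos = (⌊phi ^ 2 * n⌋₊, ⌊phi * n⌋₊ + ⌊phi ^ 2 * n⌋₊)} := by
  rw [← image_boardOf_pairs]
  ext P
  constructor
  · rintro ⟨hP, hPP⟩
    exact (PPos_iff_mem_image_pairs hP).1 hPP
  · intro h
    have hP := inBQ_iff_mem_range_boardOf.2 (Set.image_subset_range _ _ h)
    exact ⟨hP, (PPos_iff_mem_image_pairs hP).2 h⟩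
end

section
/- Let M ⊆ ℕ² \ {(0,0)} with {(0,1),(1,0)} ⊆ M, let (x,y) ∈ T_Q, and let (X,Y) = (x + A·p₁ + B·p₂, y + A·q₁ + B·q₂) for some A,B ∈ ℕ. Then every maximal sequence of legal moves of the Q-subtraction game G_Q(M) starting at (X,Y) ends at a terminal position belonging to T_Q, and that terminal position is exactly (x,y). -/
def latticeShift (p1 q1 p2 q2 : ℕ) (pos : ℕ × ℕ) (a b : ℕ) : ℕ × ℕ :=
  (pos.1 + a * p1 + b * p2, pos.2 + a * q1 + b * q2)

section

variable {p1 q1 p2 q2 : ℕ}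

lemma inBQ_latticeShift (hD : q1 * p2 ≤ p1 * q2) {pos : ℕ × ℕ}
    (h : inBQ p1 q1 p2 q2 pos) (a b : ℕ) :
    inBQ p1 q1 p2 q2 (latticeShift p1 q1 p2 q2 pos a b) := by
  obtain ⟨h1, h2⟩ := h
  constructor <;> simp only [latticeShift] <;> nlinarith

lemma nonneg_of_inTQ_of_inBQ (hD : q1 * p2 ≤ p1 * q2) {x y X Y : ℕ}
    (hxy : inTQ p1 q1 p2 q2 (x, y)) (hXY : inBQ p1 q1 p2 q2 (X, Y)) {a b : ℤ}
    (hX : (X : ℤ) = x + a * p1 + b * p2) (hY : (Y : ℤ) = y + a * q1 + b * q2) :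
    0 ≤ a ∧ 0 ≤ b := by
  obtain ⟨-, hT1, hT2⟩ := hxy
  obtain ⟨hB1, hB2⟩ := hXY
  have hD' : (q1 : ℤ) * p2 ≤ p1 * q2 := by exact_mod_cast hD
  have hB1' : (X : ℤ) * q1 ≤ Y * p1 := by exact_mod_cast hB1
  have hB2' : (Y : ℤ) * p2 ≤ X * q2 := by exact_mod_cast hB2
  simp only at hT1 hT2
  constructor
  · by_contra! ha
    have ha' : a ≤ -1 := by omega
    nlinarith
  · by_contra! hb
    have hb' : b ≤ -1 := by omega
    nlinarith

lemma qMove_latticeShift (hD : q1 * p2 ≤ p1 * q2) {M : Set (ℕ × ℕ)} {pos : ℕ × ℕ}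
    (h : inBQ p1 q1 p2 q2 pos) {a b s t : ℕ} (hst : (s, t) ∈ M) (hs : s ≤ a) (ht : t ≤ b) :
    QMove p1 q1 p2 q2 M (latticeShift p1 q1 p2 q2 pos a b)
      (latticeShift p1 q1 p2 q2 pos (a - s) (b - t)) := by
  have hle1 : p1 * s + p2 * t ≤ pos.1 + a * p1 + b * p2 := by nlinarith
  have hle2 : q1 * s + q2 * t ≤ pos.2 + a * q1 + b * q2 := by nlinarith
  refine ⟨s, t, hst, hle1, hle2, ?_, ?_, inBQ_latticeShift hD h _ _⟩ <;>
  · simp only [latticeShift]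
    zify [hs, ht, hle1, hle2]
    ring

lemma exists_latticeShift_of_qMove (hD : q1 * p2 ≤ p1 * q2) {M : Set (ℕ × ℕ)} {x y a b : ℕ}
    (hxy : inTQ p1 q1 p2 q2 (x, y)) {pos' : ℕ × ℕ}
    (h : QMove p1 q1 p2 q2 M (latticeShift p1 q1 p2 q2 (x, y) a b) pos') :
    ∃ a' b' : ℕ, pos' = latticeShift p1 q1 p2 q2 (x, y) a' b' := by
  obtain ⟨s, t, -, hle1, hle2, he1, he2, hB⟩ := h
  simp only [latticeShift] at hle1 hle2 he1 he2
  have hX : (pos'.1 : ℤ) = x + ((a : ℤ) - s) * p1 + ((b : ℤ) - t) * p2 := by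
    rw [he1]; push_cast [hle1]; ring
  have hY : (pos'.2 : ℤ) = y + ((a : ℤ) - s) * q1 + ((b : ℤ) - t) * q2 := by
    rw [he2]; push_cast [hle2]; ring
  obtain ⟨hs, ht⟩ := nonneg_of_inTQ_of_inBQ hD hxy hB hX hY
  refine ⟨a - s, b - t, Prod.ext ?_ ?_⟩ <;>
  · simp only [latticeShift]
    zify [show s ≤ a by omega, show t ≤ b by omega]
    linarith

lemma eq_zero_of_not_exists_qMove (hD : q1 * p2 ≤ p1 * q2) {M : Set (ℕ × ℕ)}
    (h01 : (0, 1) ∈ M) (h10 : (1, 0) ∈ M) {pos : ℕ × ℕ} (h : inBQ p1 q1 p2 q2 pos) {a b : ℕ}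
    (hterm : ¬ ∃ pos', QMove p1 q1 p2 q2 M (latticeShift p1 q1 p2 q2 pos a b) pos') :
    a = 0 ∧ b = 0 := by
  constructor
  · by_contra ha
    exact hterm ⟨_, qMove_latticeShift hD h h10 (by omega) (Nat.zero_le b)⟩
  · by_contra hb
    exact hterm ⟨_, qMove_latticeShift hD h h01 (Nat.zero_le a) (by omega)⟩

end

theorem stmt_18_general (p1 q1 p2 q2 : ℕ)
    (hD : q1 * p2 < p1 * q2)
    (M : Set (ℕ × ℕ))
    (h01 : (0, 1) ∈ M) (h10 : (1, 0) ∈ M)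
    (x y A B : ℕ) (hxy : inTQ p1 q1 p2 q2 (x, y))
    (k : ℕ) (f : ℕ → ℕ × ℕ)
    (hstart : f 0 = (x + A * p1 + B * p2, y + A * q1 + B * q2))
    (hsteps : ∀ i < k, QMove p1 q1 p2 q2 M (f i) (f (i + 1)))
    (hmax : ¬ ∃ pos', QMove p1 q1 p2 q2 M (f k) pos') :
    inTQ p1 q1 p2 q2 (f k) ∧ f k = (x, y) := by
  have hplay : ∀ i ≤ k, ∃ a b : ℕ, f i = latticeShift p1 q1 p2 q2 (x, y) a b := by
    intro i hi
    induction i with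
    | zero => exact ⟨A, B, hstart⟩
    | succ i ih =>
      obtain ⟨a, b, hab⟩ := ih (by omega)
      exact exists_latticeShift_of_qMove hD.le hxy (hab ▸ hsteps i (by omega))
  obtain ⟨a, b, hab⟩ := hplay k le_rfl
  obtain ⟨rfl, rfl⟩ :=
    eq_zero_of_not_exists_qMove hD.le h01 h10 hxy.1 (a := a) (b := b) (hab ▸ hmax)
  have hfk : f k = (x, y) := by simpa [latticeShift] using hab
  exact ⟨hfk ▸ hxy, hfk⟩

theorem stmt_18 (p1 q1 p2 q2 : ℕ) (hp1 : 0 < p1) (hq2 : 0 < q2)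
    (hD : q1 * p2 < p1 * q2)
    (M : Set (ℕ × ℕ)) (hM : (0, 0) ∉ M)
    (h01 : (0, 1) ∈ M) (h10 : (1, 0) ∈ M)
    (x y A B : ℕ) (hxy : inTQ p1 q1 p2 q2 (x, y))
    (k : ℕ) (f : ℕ → ℕ × ℕ)
    (hstart : f 0 = (x + A * p1 + B * p2, y + A * q1 + B * q2))
    (hsteps : ∀ i < k, QMove p1 q1 p2 q2 M (f i) (f (i + 1)))
    (hmax : ¬ ∃ pos', QMove p1 q1 p2 q2 M (f k) pos') :
    inTQ p1 q1 p2 q2 (f k) ∧ f k = (x, y) :=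
  stmt_18_general p1 q1 p2 q2 hD M h01 h10 x y A B hxy k f hstart hsteps hmax
end
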